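/- arXiv:2107.09139 — 2 statements merged into one kernel-verified Lean document; each statement's English description precedes it below -/
import Mathlib

section
/- Equality constraints on the policy can be exactly enforced for one gradient-flow step: fix an episode time e₀ and let A ∈ ℝ^{n_S×n_S} with A_{ij} = ⟨∇π^S_i(θ(e₀)), ∇π^S_j(θ(e₀))⟩ · (π^S_j(θ(e₀)))⁻¹ and B ∈ ℝ^{n_S×N} with B_{ij} = ⟨∇π^S_i(θ(e₀)), ∇π^B_j(θ(e₀))⟩ · (π^B_j(θ(e₀)))⁻¹. If A is invertible, then for every prescribed policy change Δπ ∈ ℝ^{n_S} there exists a unique safe return vector G_s ∈ ℝ^{n_S}, namely G_s = A⁻¹(Δπ − B Ĝ), such that the gradient flow driven by the concatenated returns (Ĝ, G_s) satisfies d/de [π^S_i(θ(e))]|_{e=e₀} = Δπ_i for every i ∈ {1,…,n_S}. -/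
open scoped RealInnerProductSpace Matrix

/-!
Along the flow, the chain rule gives `d/de π^S_i(θ(e))|_{e₀} = ⟪∇π^S_i(θ₀), θ'(e₀)⟫`, and substituting
the flow equation turns this into `(B Ĝ + A G_s)_i`. The derivative is thus an affine function of
`G_s` whose linear part is the invertible matrix `A`, so prescribing it to be `Δπ` determines
`G_s = A⁻¹ (Δπ − B Ĝ)`.
-/

theorem Matrix.add_mulVec_eq_iff_eq_inv_mulVec {n R : Type*} [Fintype n] [DecidableEq n]
    [CommRing R] {A : Matrix n n R} (hA : IsUnit A) (b x y : n → R) :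
    b + A *ᵥ x = y ↔ x = A⁻¹ *ᵥ (y - b) := by
  have hdet : IsUnit A.det := (Matrix.isUnit_iff_isUnit_det A).mp hA
  rw [← eq_sub_iff_add_eq']
  constructor
  · intro h
    rw [← h, Matrix.mulVec_mulVec, Matrix.nonsing_inv_mul A hdet, Matrix.one_mulVec]
  · rintro rfl
    rw [Matrix.mulVec_mulVec, Matrix.mul_nonsing_inv A hdet, Matrix.one_mulVec]

section InnerProductSpace

variable {E : Type*} [NormedAddCommGroup E] [InnerProductSpace ℝ E]

theorem HasGradientAt.hasDerivAt_comp_of_eq [CompleteSpace E] {f : E → ℝ} {f' x γ' : E}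
    {γ : ℝ → E} {t : ℝ} (hf : HasGradientAt f f' x) (hγ : HasDerivAt γ γ' t) (hx : γ t = x) :
    HasDerivAt (fun s => f (γ s)) ⟪f', γ'⟫ t := by
  subst hx
  exact hf.hasFDerivAt.comp_hasDerivAt t hγ

theorem inner_sum_smul_inv_smul {ι : Type*} [Fintype ι] (u : E) (c w : ι → ℝ) (v : ι → E) :
    ⟪u, ∑ j, c j • (w j)⁻¹ • v j⟫ = (fun j => ⟪u, v j⟫ * (w j)⁻¹) ⬝ᵥ c := by
  rw [inner_sum, dotProduct]
  refine Finset.sum_congr rfl fun j _ => ?_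
  rw [real_inner_smul_right, real_inner_smul_right]
  ring

end InnerProductSpace

theorem equality_constraints_unique_safe_returns_general
    (nθ N nS : ℕ)
    -- the policy network evaluated at the `N` batch state–action pairs
    (polB : EuclideanSpace ℝ (Fin nθ) → Fin N → ℝ)
    -- the policy network evaluated at the `nS` safe state–action pairs
    (polS : EuclideanSpace ℝ (Fin nθ) → Fin nS → ℝ)
    (hpolS : ∀ i : Fin nS, ContDiff ℝ 1 (fun θ => polS θ i))
    -- the fixed (masked) batch returns
    (Ghat : Fin N → ℝ)
    -- the episode time and the parameters at that time
    (e₀ : ℝ) (θ₀ : EuclideanSpace ℝ (Fin nθ))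
    -- for every safe return vector `Gs`, the parameter curve of the gradient flow
    -- driven by the concatenated returns `(Ghat, Gs)`, passing through `θ₀` at `e₀`
    (θ : (Fin nS → ℝ) → ℝ → EuclideanSpace ℝ (Fin nθ))
    (hθ : ∀ Gs, Differentiable ℝ (θ Gs))
    (hθ₀ : ∀ Gs, θ Gs e₀ = θ₀)
    (hflow : ∀ (Gs : Fin nS → ℝ) (e : ℝ), deriv (θ Gs) e =
      (∑ j : Fin N,
        Ghat j • (polB (θ Gs e) j)⁻¹ • gradient (fun θ' => polB θ' j) (θ Gs e)) +
      ∑ i : Fin nS,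
        Gs i • (polS (θ Gs e) i)⁻¹ • gradient (fun θ' => polS θ' i) (θ Gs e))
    -- the NTK-based matrices `A` and `B` evaluated at `θ₀`
    (A : Matrix (Fin nS) (Fin nS) ℝ)
    (hA : ∀ i j : Fin nS, A i j =
      ⟪gradient (fun θ' => polS θ' i) θ₀, gradient (fun θ' => polS θ' j) θ₀⟫
        * (polS θ₀ j)⁻¹)
    (B : Matrix (Fin nS) (Fin N) ℝ)
    (hB : ∀ (i : Fin nS) (j : Fin N), B i j =
      ⟪gradient (fun θ' => polS θ' i) θ₀, gradient (fun θ' => polB θ' j) θ₀⟫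
        * (polB θ₀ j)⁻¹)
    (hAinv : IsUnit A)
    -- the prescribed policy change at the safe state–action pairs
    (Δπ : Fin nS → ℝ) :
    (∀ i : Fin nS,
      deriv (fun e => polS (θ (A⁻¹.mulVec (Δπ - B.mulVec Ghat)) e) i) e₀ = Δπ i) ∧
    (∀ Gs : Fin nS → ℝ,
      (∀ i : Fin nS, deriv (fun e => polS (θ Gs e) i) e₀ = Δπ i) →
        Gs = A⁻¹.mulVec (Δπ - B.mulVec Ghat)) := by
  have hderiv (Gs : Fin nS → ℝ) (i : Fin nS) :
      deriv (fun e => polS (θ Gs e) i) e₀ = (B *ᵥ Ghat + A *ᵥ Gs) i := by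
    have hgrad := ((hpolS i).differentiable one_ne_zero θ₀).hasGradientAt
    rw [(hgrad.hasDerivAt_comp_of_eq (hθ Gs e₀).hasDerivAt (hθ₀ Gs)).deriv, hflow, hθ₀,
      inner_add_right, inner_sum_smul_inv_smul, inner_sum_smul_inv_smul]
    simp only [Pi.add_apply, Matrix.mulVec, hA, hB]
  have hsolves (Gs : Fin nS → ℝ) :
      (∀ i, deriv (fun e => polS (θ Gs e) i) e₀ = Δπ i) ↔
        Gs = A⁻¹ *ᵥ (Δπ - B *ᵥ Ghat) := by
    simp only [hderiv]
    rw [← funext_iff, Matrix.add_mulVec_eq_iff_eq_inv_mulVec hAinv]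
  exact ⟨(hsolves _).2 rfl, fun Gs => (hsolves Gs).1⟩

/-- Equality constraints on the policy can be exactly enforced for one
gradient-flow step: with `A i j = ⟪∇π^S_i(θ₀), ∇π^S_j(θ₀)⟫ (π^S_j(θ₀))⁻¹` and
`B i j = ⟪∇π^S_i(θ₀), ∇π^B_j(θ₀)⟫ (π^B_j(θ₀))⁻¹`, if `A` is invertible then for every
prescribed policy change `Δπ` there is a unique safe return vector `G_s`, namely
`G_s = A⁻¹ (Δπ − B Ĝ)`, such that the gradient flow driven by the concatenated returns
`(Ĝ, G_s)` satisfies `d/de π^S_i(θ(e))|_{e = e₀} = Δπ_i` for all `i`. -/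
theorem equality_constraints_unique_safe_returns
    (nθ N nS : ℕ)
    -- the policy network evaluated at the `N` batch state–action pairs
    (polB : EuclideanSpace ℝ (Fin nθ) → Fin N → ℝ)
    (hpolB : ∀ j : Fin N, ContDiff ℝ 1 (fun θ => polB θ j))
    -- the policy network evaluated at the `nS` safe state–action pairs
    (polS : EuclideanSpace ℝ (Fin nθ) → Fin nS → ℝ)
    (hpolS : ∀ i : Fin nS, ContDiff ℝ 1 (fun θ => polS θ i))
    -- the fixed (masked) batch returns
    (Ghat : Fin N → ℝ)
    -- the episode time and the parameters at that time
    (e₀ : ℝ) (θ₀ : EuclideanSpace ℝ (Fin nθ))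
    -- for every safe return vector `Gs`, the parameter curve of the gradient flow
    -- driven by the concatenated returns `(Ghat, Gs)`, passing through `θ₀` at `e₀`
    (θ : (Fin nS → ℝ) → ℝ → EuclideanSpace ℝ (Fin nθ))
    (hθ : ∀ Gs, Differentiable ℝ (θ Gs))
    (hθ₀ : ∀ Gs, θ Gs e₀ = θ₀)
    (hflow : ∀ (Gs : Fin nS → ℝ) (e : ℝ), deriv (θ Gs) e =
      (∑ j : Fin N,
        Ghat j • (polB (θ Gs e) j)⁻¹ • gradient (fun θ' => polB θ' j) (θ Gs e)) +
      ∑ i : Fin nS,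
        Gs i • (polS (θ Gs e) i)⁻¹ • gradient (fun θ' => polS θ' i) (θ Gs e))
    -- strict positivity of all policy components along the flows
    (hposB : ∀ (Gs : Fin nS → ℝ) (e : ℝ) (j : Fin N), 0 < polB (θ Gs e) j)
    (hposS : ∀ (Gs : Fin nS → ℝ) (e : ℝ) (i : Fin nS), 0 < polS (θ Gs e) i)
    -- the NTK-based matrices `A` and `B` evaluated at `θ₀`
    (A : Matrix (Fin nS) (Fin nS) ℝ)
    (hA : ∀ i j : Fin nS, A i j =
      ⟪gradient (fun θ' => polS θ' i) θ₀, gradient (fun θ' => polS θ' j) θ₀⟫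
        * (polS θ₀ j)⁻¹)
    (B : Matrix (Fin nS) (Fin N) ℝ)
    (hB : ∀ (i : Fin nS) (j : Fin N), B i j =
      ⟪gradient (fun θ' => polS θ' i) θ₀, gradient (fun θ' => polB θ' j) θ₀⟫
        * (polB θ₀ j)⁻¹)
    (hAinv : IsUnit A)
    -- the prescribed policy change at the safe state–action pairs
    (Δπ : Fin nS → ℝ) :
    (∀ i : Fin nS,
      deriv (fun e => polS (θ (A⁻¹.mulVec (Δπ - B.mulVec Ghat)) e) i) e₀ = Δπ i) ∧
    (∀ Gs : Fin nS → ℝ,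
      (∀ i : Fin nS, deriv (fun e => polS (θ Gs e) i) e₀ = Δπ i) →
        Gs = A⁻¹.mulVec (Δπ - B.mulVec Ghat)) :=
  equality_constraints_unique_safe_returns_general nθ N nS polB polS hpolS Ghat e₀ θ₀ θ hθ hθ₀ hflow
    A hA B hB hAinv Δπ
end

section
/- Inequality constraints on the policy change are enforced by any feasible safe return vector: fix an episode time e₀ and let A ∈ ℝ^{n_S×n_S} with A_{ij} = ⟨∇π^S_i(θ(e₀)), ∇π^S_j(θ(e₀))⟩ · (π^S_j(θ(e₀)))⁻¹ and B ∈ ℝ^{n_S×N} with B_{ij} = ⟨∇π^S_i(θ(e₀)), ∇π^B_j(θ(e₀))⟩ · (π^B_j(θ(e₀)))⁻¹. If the safe return vector G_s ∈ ℝ^{n_S} satisfies the componentwise inequality Δπ − B Ĝ ≤ A G_s for a prescribed vector Δπ ∈ ℝ^{n_S}, then the gradient flow driven by the concatenated returns (Ĝ, G_s) satisfies d/de [π^S_i(θ(e))]|_{e=e₀} ≥ Δπ_i for every i ∈ {1,…,n_S}. -/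
open scoped RealInnerProductSpace

section GradientFlow

variable {E : Type*} [NormedAddCommGroup E] [InnerProductSpace ℝ E]

theorem deriv_comp_eq_inner_gradient [CompleteSpace E] {f : E → ℝ} {γ : ℝ → E} {t : ℝ}
    (hf : DifferentiableAt ℝ f (γ t)) (hγ : DifferentiableAt ℝ γ t) :
    deriv (fun s => f (γ s)) t = ⟪gradient f (γ t), deriv γ t⟫ :=
  (hf.hasFDerivAt.comp_hasDerivAt t hγ.hasDerivAt).deriv.trans inner_gradient_left.symm

theorem inner_sum_smul_inv_smul_eq_mulVec {ι κ : Type*} [Fintype κ] (M : Matrix ι κ ℝ)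
    (g : ι → E) (v : κ → E) (p : κ → ℝ) (hM : ∀ i j, M i j = ⟪g i, v j⟫ * (p j)⁻¹)
    (c : κ → ℝ) (i : ι) :
    ⟪g i, ∑ j, c j • (p j)⁻¹ • v j⟫ = M.mulVec c i := by
  simp only [inner_sum, real_inner_smul_right, Matrix.mulVec, dotProduct, hM]
  exact Finset.sum_congr rfl fun j _ => by ring

end GradientFlow

theorem inequality_constraints_enforced_by_feasible_safe_returns_general
    (nθ N nS : ℕ)
    -- the policy network evaluated at the `N` batch state–action pairs
    (polB : EuclideanSpace ℝ (Fin nθ) → Fin N → ℝ)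
    -- the policy network evaluated at the `nS` safe state–action pairs
    (polS : EuclideanSpace ℝ (Fin nθ) → Fin nS → ℝ)
    (hpolS : ∀ i : Fin nS, ContDiff ℝ 1 (fun θ => polS θ i))
    -- the fixed (masked) batch returns and the safe return vector
    (Ghat : Fin N → ℝ) (Gs : Fin nS → ℝ)
    -- the episode time and the parameters at that time
    (e₀ : ℝ) (θ₀ : EuclideanSpace ℝ (Fin nθ))
    -- the parameter curve of the gradient flow driven by the concatenated
    -- returns `(Ghat, Gs)`, passing through `θ₀` at `e₀`
    (θ : ℝ → EuclideanSpace ℝ (Fin nθ))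
    (hθ : Differentiable ℝ θ)
    (hθ₀ : θ e₀ = θ₀)
    (hflow : ∀ e : ℝ, deriv θ e =
      (∑ j : Fin N,
        Ghat j • (polB (θ e) j)⁻¹ • gradient (fun θ' => polB θ' j) (θ e)) +
      ∑ i : Fin nS,
        Gs i • (polS (θ e) i)⁻¹ • gradient (fun θ' => polS θ' i) (θ e))
    -- the NTK-based matrices `A` and `B` evaluated at `θ₀`
    (A : Matrix (Fin nS) (Fin nS) ℝ)
    (hA : ∀ i j : Fin nS, A i j =
      ⟪gradient (fun θ' => polS θ' i) θ₀, gradient (fun θ' => polS θ' j) θ₀⟫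
        * (polS θ₀ j)⁻¹)
    (B : Matrix (Fin nS) (Fin N) ℝ)
    (hB : ∀ (i : Fin nS) (j : Fin N), B i j =
      ⟪gradient (fun θ' => polS θ' i) θ₀, gradient (fun θ' => polB θ' j) θ₀⟫
        * (polB θ₀ j)⁻¹)
    -- the prescribed policy change and the feasibility of `Gs`
    (Δπ : Fin nS → ℝ)
    (hfeas : ∀ i : Fin nS, Δπ i - B.mulVec Ghat i ≤ A.mulVec Gs i) :
    ∀ i : Fin nS, Δπ i ≤ deriv (fun e => polS (θ e) i) e₀ := by
  intro i
  have hpolS_diff : DifferentiableAt ℝ (fun θ' => polS θ' i) (θ e₀) :=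
    ((hpolS i).differentiable one_ne_zero).differentiableAt
  have hrate : deriv (fun e => polS (θ e) i) e₀ = B.mulVec Ghat i + A.mulVec Gs i := by
    rw [deriv_comp_eq_inner_gradient hpolS_diff (hθ e₀), hflow, hθ₀, inner_add_right,
      inner_sum_smul_inv_smul_eq_mulVec B _ _ _ hB, inner_sum_smul_inv_smul_eq_mulVec A _ _ _ hA]
  linarith [hfeas i]

/-- Inequality constraints on the policy change are enforced by any
feasible safe return vector: with `A i j = ⟪∇π^S_i(θ₀), ∇π^S_j(θ₀)⟫ (π^S_j(θ₀))⁻¹` and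
`B i j = ⟪∇π^S_i(θ₀), ∇π^B_j(θ₀)⟫ (π^B_j(θ₀))⁻¹`, if the safe return vector `G_s`
satisfies the componentwise inequality `Δπ − B Ĝ ≤ A G_s`, then the gradient flow driven
by the concatenated returns `(Ĝ, G_s)` satisfies `d/de π^S_i(θ(e))|_{e = e₀} ≥ Δπ_i`
for every `i`. -/
theorem inequality_constraints_enforced_by_feasible_safe_returns
    (nθ N nS : ℕ)
    -- the policy network evaluated at the `N` batch state–action pairs
    (polB : EuclideanSpace ℝ (Fin nθ) → Fin N → ℝ)
    (hpolB : ∀ j : Fin N, ContDiff ℝ 1 (fun θ => polB θ j))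
    -- the policy network evaluated at the `nS` safe state–action pairs
    (polS : EuclideanSpace ℝ (Fin nθ) → Fin nS → ℝ)
    (hpolS : ∀ i : Fin nS, ContDiff ℝ 1 (fun θ => polS θ i))
    -- the fixed (masked) batch returns and the safe return vector
    (Ghat : Fin N → ℝ) (Gs : Fin nS → ℝ)
    -- the episode time and the parameters at that time
    (e₀ : ℝ) (θ₀ : EuclideanSpace ℝ (Fin nθ))
    -- the parameter curve of the gradient flow driven by the concatenated
    -- returns `(Ghat, Gs)`, passing through `θ₀` at `e₀`
    (θ : ℝ → EuclideanSpace ℝ (Fin nθ))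
    (hθ : Differentiable ℝ θ)
    (hθ₀ : θ e₀ = θ₀)
    (hflow : ∀ e : ℝ, deriv θ e =
      (∑ j : Fin N,
        Ghat j • (polB (θ e) j)⁻¹ • gradient (fun θ' => polB θ' j) (θ e)) +
      ∑ i : Fin nS,
        Gs i • (polS (θ e) i)⁻¹ • gradient (fun θ' => polS θ' i) (θ e))
    -- strict positivity of all policy components along the flow
    (hposB : ∀ (e : ℝ) (j : Fin N), 0 < polB (θ e) j)
    (hposS : ∀ (e : ℝ) (i : Fin nS), 0 < polS (θ e) i)
    -- the NTK-based matrices `A` and `B` evaluated at `θ₀`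
    (A : Matrix (Fin nS) (Fin nS) ℝ)
    (hA : ∀ i j : Fin nS, A i j =
      ⟪gradient (fun θ' => polS θ' i) θ₀, gradient (fun θ' => polS θ' j) θ₀⟫
        * (polS θ₀ j)⁻¹)
    (B : Matrix (Fin nS) (Fin N) ℝ)
    (hB : ∀ (i : Fin nS) (j : Fin N), B i j =
      ⟪gradient (fun θ' => polS θ' i) θ₀, gradient (fun θ' => polB θ' j) θ₀⟫
        * (polB θ₀ j)⁻¹)
    -- the prescribed policy change and the feasibility of `Gs`
    (Δπ : Fin nS → ℝ)
    (hfeas : ∀ i : Fin nS, Δπ i - B.mulVec Ghat i ≤ A.mulVec Gs i) :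
    ∀ i : Fin nS, Δπ i ≤ deriv (fun e => polS (θ e) i) e₀ :=
  inequality_constraints_enforced_by_feasible_safe_returns_general nθ N nS polB polS hpolS Ghat Gs
    e₀ θ₀ θ hθ hθ₀ hflow A hA B hB Δπ hfeas
end
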